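/- arXiv:2404.17275 — 4 statements merged into one kernel-verified Lean document; each statement's English description precedes it below -/
import Mathlib

section
/- Combining the mixture-mass inequality with the robustness-mass bound: under the assumptions (a) $Q(y=i) \leq r\,P(y=i)$ for all classes $i$; (b) every class $i \in S_2$ has robustness failure rate at least $c = \min\{\epsilon, q\} > 0$ on the mixture $\mu = \frac{1}{2}(P+Q)$; and (c) $R_\mu(f) = \sum_i r_i \, \mu(y=i)$ is the total robustness failure of $f$ on $\mu$ (with $r_i$ the failure rate of class $i$), we have $\sum_{i \in S_2} Q(y=i) \leq \frac{2r}{c(1+r)} R_\mu(f)$. -/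
/-! Since `Q ≤ r P`, the target is at most a `2r/(1+r)` fraction of the mixture `μ = (P+Q)/2`,
classwise and hence on `S₂`. On `S₂` the failure rate is at least `c`, so `c · μ(S₂)` is a
lower bound for the total failure `R_μ(f)`. -/

open Finset

theorem le_mul_mixture_of_le_mul {K : Type*} [Field K] [LinearOrder K] [IsStrictOrderedRing K]
    {p q r : K} (hr : 0 < r) (h : q ≤ r * p) : q ≤ 2 * r / (1 + r) * ((p + q) / 2) := by
  have h1r : 0 < 1 + r := by linarith
  rw [show 2 * r / (1 + r) * ((p + q) / 2) = r * (p + q) / (1 + r) by field_simp,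
    le_div_iff₀ h1r]
  linarith

theorem mul_sum_le_sum_mul_of_le {ι R : Type*} [Fintype ι] [CommSemiring R] [PartialOrder R]
    [IsOrderedRing R] {s : Finset ι} {w f : ι → R} {c : R} (hw : ∀ i, 0 ≤ w i)
    (hf : ∀ i, 0 ≤ f i) (hc : ∀ i ∈ s, c ≤ f i) : c * ∑ i ∈ s, w i ≤ ∑ i, f i * w i :=
  calc c * ∑ i ∈ s, w i = ∑ i ∈ s, c * w i := mul_sum _ _ _
    _ ≤ ∑ i ∈ s, f i * w i := sum_le_sum fun i hi => mul_le_mul_of_nonneg_right (hc i hi) (hw i)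
    _ ≤ ∑ i, f i * w i :=
        sum_le_sum_of_subset_of_nonneg (subset_univ s) fun i _ _ => mul_nonneg (hf i) (hw i)

theorem mixture_robustness_bound_general {Y : Type*} [Fintype Y]
    (P Q μ rfail : Y → ℝ) (S₂ : Finset Y)
    (r ε q : ℝ) (hr : 0 < r) (hε : 0 < ε) (hq : 0 < q)
    (hP0 : ∀ i, 0 ≤ P i) (hQ0 : ∀ i, 0 ≤ Q i)
    (hμ : ∀ i, μ i = (P i + Q i) / 2)
    (hratio : ∀ i, Q i ≤ r * P i)
    (hrfail : ∀ i, 0 ≤ rfail i ∧ rfail i ≤ 1)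
    (hS₂ : ∀ i ∈ S₂, min ε q ≤ rfail i)
    (Rμ : ℝ) (hRμ : Rμ = ∑ i, rfail i * μ i) :
    ∑ i ∈ S₂, Q i ≤ 2 * r / (min ε q * (1 + r)) * Rμ := by
  have hc : 0 < min ε q := lt_min hε hq
  have hμ0 : ∀ i, 0 ≤ μ i := fun i => by rw [hμ i]; linarith [hP0 i, hQ0 i]
  have mixture_mass : ∑ i ∈ S₂, Q i ≤ 2 * r / (1 + r) * ∑ i ∈ S₂, μ i := by
    rw [mul_sum]
    exact sum_le_sum fun i _ => hμ i ▸ le_mul_mixture_of_le_mul hr (hratio i)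
  have robustness_mass : ∑ i ∈ S₂, μ i ≤ Rμ / min ε q := by
    rw [le_div_iff₀ hc, mul_comm, hRμ]
    exact mul_sum_le_sum_mul_of_le hμ0 (fun i => (hrfail i).1) hS₂
  calc ∑ i ∈ S₂, Q i ≤ 2 * r / (1 + r) * (Rμ / min ε q) := by
        refine mixture_mass.trans ?_
        gcongr
    _ = 2 * r / (min ε q * (1 + r)) * Rμ := by
        field_simp

/-- Combining the mixture-mass inequality with the robustness-mass bound:
`∑_{i ∈ S₂} Q(y=i) ≤ (2r / (c(1+r))) · R_μ(f)` where `c = min{ε, q}`. -/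
theorem mixture_robustness_bound {Y : Type*} [Fintype Y] [DecidableEq Y]
    (P Q μ rfail : Y → ℝ) (S₂ : Finset Y)
    (r ε q : ℝ) (hr : 0 < r) (hε : 0 < ε) (hq : 0 < q)
    (hP0 : ∀ i, 0 ≤ P i) (hQ0 : ∀ i, 0 ≤ Q i)
    (hμ : ∀ i, μ i = (P i + Q i) / 2)
    (hratio : ∀ i, Q i ≤ r * P i)
    (hrfail : ∀ i, 0 ≤ rfail i ∧ rfail i ≤ 1)
    (hS₂ : ∀ i ∈ S₂, min ε q ≤ rfail i)
    (Rμ : ℝ) (hRμ : Rμ = ∑ i, rfail i * μ i) :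
    ∑ i ∈ S₂, Q i ≤ 2 * r / (min ε q * (1 + r)) * Rμ :=
  mixture_robustness_bound_general P Q μ rfail S₂ r ε q hr hε hq hP0 hQ0 hμ hratio hrfail hS₂ Rμ hRμ
end

section
/- Abstract form of Lemma A.3: let $f : \mathcal{X} \to [0,1]^k$ be $L$-Lipschitz with respect to a metric $d$, let $\xi > 0$ with $2L\xi < 1$, and define the margin $M(f(x)) = f(x)_{i^*} - \max_{i \neq i^*} f(x)_i$ where $i^* = \arg\max_i f(x)_i$. If $x' \in \mathcal{X}$ satisfies $d(x, x') \leq \xi$ and the argmax predictions differ, $\tilde f(x) \neq \tilde f(x')$, then $M(f(x)) \leq 2L\xi$. Consequently, $\mathbb{I}(\exists x' \in \mathcal{N}(x): \tilde f(x) \neq \tilde f(x')) \leq \frac{1 - M(f(x))}{1 - 2L\xi}$ pointwise. -/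
/-!
Lipschitz continuity moves every score by at most `Lξ` between `x` and `x'`. If the argmax
flips, the margin at `x` is at most the gap at `x` between the old and the new winner, and that
gap is at most `2Lξ` because the new winner is ahead at `x'`. The indicator bound follows
because the margin of `[0,1]`-valued scores is at most `1`.
-/

open Finset

section Margin

variable {ι : Type*} {s : Finset ι} {u v : ι → ℝ} {i j : ι} {ε : ℝ}

theorem sub_sup'_le_of_abs_sub_le (hs : s.Nonempty) (hj : j ∈ s) (hv : v i ≤ v j)
    (huv : ∀ l, |u l - v l| ≤ ε) : u i - s.sup' hs u ≤ 2 * ε := by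
  have hi := (abs_le.1 (huv i)).2
  have hj' := (abs_le.1 (huv j)).1
  calc u i - s.sup' hs u ≤ u i - u j := by gcongr; exact le_sup' u hj
    _ ≤ 2 * ε := by linarith

theorem sub_sup'_le_one (hs : s.Nonempty) (hu : ∀ l, u l ∈ Set.Icc (0 : ℝ) 1) :
    u i - s.sup' hs u ≤ 1 := by
  obtain ⟨l, hl⟩ := hs
  have h0 : 0 ≤ s.sup' ⟨l, hl⟩ u := (hu l).1.trans (le_sup' u hl)
  linarith [(hu i).2]

end Margin

theorem indicator_one_le_one_sub_div {α : Type*} {S : Set α} {x : α} {m c : ℝ} (hc : c < 1)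
    (hm : m ≤ 1) (hS : x ∈ S → m ≤ c) : S.indicator 1 x ≤ (1 - m) / (1 - c) := by
  have hden : 0 < 1 - c := sub_pos.2 hc
  by_cases hx : x ∈ S
  · rw [Set.indicator_of_mem hx, Pi.one_apply, le_div_iff₀ hden]
    linarith [hS hx]
  · rw [Set.indicator_of_notMem hx]
    exact div_nonneg (sub_nonneg.2 hm) hden.le

theorem margin_pointwise_bound_general {X : Type*} [MetricSpace X] {k : ℕ}
    (f : X → Fin k → ℝ) (hf01 : ∀ x i, f x i ∈ Set.Icc (0 : ℝ) 1)
    (L ξ : ℝ) (hL : 0 ≤ L) (hLξ : 2 * L * ξ < 1)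
    (hLip : ∀ x x' i, |f x i - f x' i| ≤ L * dist x x')
    (tf : X → Fin k) (htf : ∀ x i, f x i ≤ f x (tf x))
    (hne : ∀ x, (Finset.univ.erase (tf x)).Nonempty)
    (M : X → ℝ)
    (hM : ∀ x, M x = f x (tf x) - (Finset.univ.erase (tf x)).sup' (hne x) (f x)) :
    (∀ x x', dist x x' ≤ ξ → tf x ≠ tf x' → M x ≤ 2 * L * ξ) ∧
    ∀ x, Set.indicator {y : X | ∃ y', dist y y' ≤ ξ ∧ tf y ≠ tf y'} 1 x ≤
      (1 - M x) / (1 - 2 * L * ξ) := by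
  have key : ∀ x x', dist x x' ≤ ξ → tf x ≠ tf x' → M x ≤ 2 * L * ξ := by
    intro x x' hd hpred
    have hclose : ∀ l, |f x l - f x' l| ≤ L * ξ := fun l =>
      (hLip x x' l).trans (mul_le_mul_of_nonneg_left hd hL)
    rw [hM x, mul_assoc]
    exact sub_sup'_le_of_abs_sub_le (hne x) (mem_erase.2 ⟨Ne.symm hpred, mem_univ _⟩)
      (htf x' (tf x)) hclose
  refine ⟨key, fun x => indicator_one_le_one_sub_div hLξ ?_ ?_⟩
  · rw [hM x]
    exact sub_sup'_le_one (hne x) (hf01 x)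
  · rintro ⟨x', hd, hpred⟩
    exact key x x' hd hpred

/-- Abstract form of Lemma A.3 (pointwise): if `f : X → [0,1]^k` is
`L`-Lipschitz, `2Lξ < 1`, and some `x'` within distance `ξ` of `x` has a
different argmax prediction, then the margin at `x` is at most `2Lξ`;
consequently the indicator of local-robustness failure is bounded pointwise
by `(1 - M(f(x)))/(1 - 2Lξ)`. -/
theorem margin_pointwise_bound {X : Type*} [MetricSpace X] {k : ℕ} (hk : 2 ≤ k)
    (f : X → Fin k → ℝ) (hf01 : ∀ x i, f x i ∈ Set.Icc (0 : ℝ) 1)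
    (L ξ : ℝ) (hL : 0 ≤ L) (hξ : 0 < ξ) (hLξ : 2 * L * ξ < 1)
    (hLip : ∀ x x' i, |f x i - f x' i| ≤ L * dist x x')
    (tf : X → Fin k) (htf : ∀ x i, f x i ≤ f x (tf x))
    (hne : ∀ x, (Finset.univ.erase (tf x)).Nonempty)
    (M : X → ℝ)
    (hM : ∀ x, M x = f x (tf x) - (Finset.univ.erase (tf x)).sup' (hne x) (f x)) :
    (∀ x x', dist x x' ≤ ξ → tf x ≠ tf x' → M x ≤ 2 * L * ξ) ∧
    ∀ x, Set.indicator {y : X | ∃ y', dist y y' ≤ ξ ∧ tf y ≠ tf y'} 1 x ≤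
      (1 - M x) / (1 - 2 * L * ξ) :=
  margin_pointwise_bound_general f hf01 L ξ hL hLξ hLip tf htf hne M hM
end

section
/- Lemma A.3: Let $f : \mathcal{X} \to [0,1]^k$ be $L$-Lipschitz w.r.t. a metric $d$, with $2L\xi < 1$. For any probability distribution $P$ on $\mathcal{X}$, the robustness failure $R_P(f) = P(\{x : \exists x' \text{ with } d(x,x') \leq \xi \text{ and } \tilde f(x) \neq \tilde f(x')\})$ satisfies $R_P(f) \leq \frac{1}{1 - 2L\xi}\bigl(1 - M_P(f)\bigr)$, where $M_P(f) = \mathbb{E}_{x \sim P}\,M(f(x))$ is the expected margin. -/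
/-!
If some `x'` within distance `ξ` of `x` is classified differently, then comparing the two
argmax classes through the Lipschitz bound `|f x i - f x' i| ≤ Lξ` shows that the margin at
`x` is at most `2Lξ`. Since the margin never exceeds `1`, Markov's inequality for the
nonnegative function `1 - M` gives `(1 - 2Lξ) R_P(f) ≤ 1 - M_P(f)`.
-/

open Finset MeasureTheory

theorem sub_sup'_le_one_s9 {ι : Type*} {g : ι → ℝ} (hg : ∀ i, g i ∈ Set.Icc (0 : ℝ) 1) (i : ι)
    {s : Finset ι} (hs : s.Nonempty) : g i - s.sup' hs g ≤ 1 := by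
  obtain ⟨j, hj⟩ := hs
  have hsup_nonneg : 0 ≤ s.sup' ⟨j, hj⟩ g := (hg j).1.trans (le_sup' g hj)
  linarith [(hg i).2]

theorem sub_sup'_erase_le_of_ne_argmax {ι : Type*} [Fintype ι] [DecidableEq ι]
    {g g' : ι → ℝ} {ε : ℝ} (hclose : ∀ l, |g l - g' l| ≤ ε) {i j : ι} (hj : ∀ l, g' l ≤ g' j) (hij : i ≠ j)
    (hne : (univ.erase i).Nonempty) : g i - (univ.erase i).sup' hne g ≤ 2 * ε := by
  have hgj : g j ≤ (univ.erase i).sup' hne g := le_sup' g (mem_erase.2 ⟨hij.symm, mem_univ j⟩)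
  have hi := abs_le.1 (hclose i)
  have hj' := abs_le.1 (hclose j)
  linarith [hj i]

theorem mul_measureReal_le_one_sub_integral {α : Type*} [MeasurableSpace α] {μ : Measure α}
    [IsProbabilityMeasure μ] {φ : α → ℝ} (hφ : Integrable φ μ) (hφ_le : ∀ᵐ x ∂μ, φ x ≤ 1)
    {s : Set α} {c : ℝ} (hc : c ≤ 1) (hs : ∀ x ∈ s, φ x ≤ c) :
    (1 - c) * μ.real s ≤ 1 - ∫ x, φ x ∂μ := by
  have hsub : s ⊆ {x | 1 - c ≤ 1 - φ x} := fun x hx => sub_le_sub_left (hs x hx) 1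
  have hmarkov := mul_meas_ge_le_integral_of_nonneg (f := fun x => 1 - φ x)
    (hφ_le.mono fun x hx => sub_nonneg.2 hx) ((integrable_const 1).sub hφ) (1 - c)
  rw [integral_sub (integrable_const 1) hφ, integral_const, probReal_univ, one_smul] at hmarkov
  calc (1 - c) * μ.real s ≤ (1 - c) * μ.real {x | 1 - c ≤ 1 - φ x} :=
        mul_le_mul_of_nonneg_left (measureReal_mono hsub) (sub_nonneg.2 hc)
    _ ≤ 1 - ∫ x, φ x ∂μ := hmarkov

theorem robustness_le_margin_general {X : Type*} [MetricSpace X] [MeasurableSpace X]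
    {k : ℕ}
    (f : X → Fin k → ℝ) (hf01 : ∀ x i, f x i ∈ Set.Icc (0 : ℝ) 1)
    (L ξ : ℝ) (hL : 0 ≤ L) (hLξ : 2 * L * ξ < 1)
    (hLip : ∀ x x' i, |f x i - f x' i| ≤ L * dist x x')
    (tf : X → Fin k) (htf : ∀ x i, f x i ≤ f x (tf x))
    (hne : ∀ x, (Finset.univ.erase (tf x)).Nonempty)
    (M : X → ℝ)
    (hM : ∀ x, M x = f x (tf x) - (Finset.univ.erase (tf x)).sup' (hne x) (f x))
    (P : Measure X) [IsProbabilityMeasure P]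
    (hMint : Integrable M P) :
    (P {x : X | ∃ x', dist x x' ≤ ξ ∧ tf x ≠ tf x'}).toReal ≤
      (1 - ∫ x, M x ∂P) / (1 - 2 * L * ξ) := by
  have hM_le_one : ∀ x, M x ≤ 1 := fun x => hM x ▸ sub_sup'_le_one_s9 (hf01 x) _ (hne x)
  have hM_small : ∀ x ∈ {x : X | ∃ x', dist x x' ≤ ξ ∧ tf x ≠ tf x'}, M x ≤ 2 * L * ξ := by
    rintro x ⟨x', hdist, htf_ne⟩
    rw [hM x, mul_assoc]
    refine sub_sup'_erase_le_of_ne_argmax (fun i => ?_) (htf x') htf_ne (hne x)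
    exact (hLip x x' i).trans (mul_le_mul_of_nonneg_left hdist hL)
  rw [le_div_iff₀ (by linarith), mul_comm]
  exact mul_measureReal_le_one_sub_integral hMint (.of_forall hM_le_one) (by linarith) hM_small

/-- Lemma A.3: for an `L`-Lipschitz classifier `f : X → [0,1]^k` with
`2Lξ < 1` and any probability distribution `P`, the robustness failure
probability is at most `(1 - M_P(f)) / (1 - 2Lξ)`, where `M_P(f)` is the
expected margin under `P`. -/
theorem robustness_le_margin {X : Type*} [MetricSpace X] [MeasurableSpace X]
    [OpensMeasurableSpace X] {k : ℕ} (hk : 2 ≤ k)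
    (f : X → Fin k → ℝ) (hf01 : ∀ x i, f x i ∈ Set.Icc (0 : ℝ) 1)
    (L ξ : ℝ) (hL : 0 ≤ L) (hξ : 0 < ξ) (hLξ : 2 * L * ξ < 1)
    (hLip : ∀ x x' i, |f x i - f x' i| ≤ L * dist x x')
    (tf : X → Fin k) (htf : ∀ x i, f x i ≤ f x (tf x))
    (hne : ∀ x, (Finset.univ.erase (tf x)).Nonempty)
    (M : X → ℝ)
    (hM : ∀ x, M x = f x (tf x) - (Finset.univ.erase (tf x)).sup' (hne x) (f x))
    (P : Measure X) [IsProbabilityMeasure P]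
    (hMint : Integrable M P)
    (hmeas : MeasurableSet {x : X | ∃ x', dist x x' ≤ ξ ∧ tf x ≠ tf x'}) :
    (P {x : X | ∃ x', dist x x' ≤ ξ ∧ tf x ≠ tf x'}).toReal ≤
      (1 - ∫ x, M x ∂P) / (1 - 2 * L * ξ) :=
  robustness_le_margin_general f hf01 L ξ hL hLξ hLip tf htf hne M hM P hMint
end

section
/- Closed-form structure of the reweighting linear program: fix $d \in \mathbb{R}^m$ and consider minimizing $d^T w$ over $\mathcal{W}' = \{w : w_i \geq 0, \sum_i w_i = m, \sum_i (w_i-1)^2 \leq \rho m\}$. If $d$ is not a constant vector and the minimizer $w^*$ is interior to the nonnegativity constraints (all $w^*_i > 0$), then $w^*_i = 1 - \frac{\sqrt{\rho m}\,(d_i - \bar d)}{\|d - \bar d \mathbf{1}\|_2}$ where $\bar d = \frac{1}{m}\sum_i d_i$; in particular, samples with smaller discriminator output $d_i$ receive larger weight $w^*_i$. -/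
/-!
Since every coordinate of `w` is positive, `w` is a local, hence by convexity a global,
minimizer of `v ↦ dᵀv` on the set cut out by `∑ v = m` and `‖v - 1‖² ≤ ρm` alone. For `u`, `v`
on the hyperplane `∑ v = m`, `dᵀv - dᵀu = ⟨e, v - 1⟩ - ⟨e, u - 1⟩` with `e = d - d̄ 1`, so
comparing `w` with the point `1 - √(ρm) e / ‖e‖` of that set gives `⟨e, w - 1⟩ ≤ -√(ρm) ‖e‖`.
Together with `‖w - 1‖² ≤ ρm` this forces `‖‖e‖ (w - 1) + √(ρm) e‖² ≤ 0`: the equality case of Cauchy–Schwarz.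
-/

open Finset Topology

theorem IsMinOn.of_isMinOn_inter_of_mem_nhds {E β : Type*} [AddCommGroup E] [TopologicalSpace E]
    [Module ℝ E] [IsTopologicalAddGroup E] [ContinuousSMul ℝ E] [AddCommGroup β] [PartialOrder β]
    [IsOrderedAddMonoid β] [Module ℝ β] [IsOrderedModule ℝ β] [PosSMulReflectLE ℝ β]
    {f : E → β} {s t : Set E} {a : E} (ha : a ∈ s) (ht : t ∈ 𝓝 a) (hmin : IsMinOn f (s ∩ t) a)
    (hf : ConvexOn ℝ s f) : IsMinOn f s a :=
  IsMinOn.of_isLocalMinOn_of_convexOn ha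
    (by filter_upwards [self_mem_nhdsWithin, mem_nhdsWithin_of_mem_nhds ht] with x hxs hxt
        using hmin ⟨hxs, hxt⟩) hf

section Weights

variable {ι : Type*} [Fintype ι]

theorem convexOn_sum_sq_sub (c : ι → ℝ) :
    ConvexOn ℝ Set.univ fun v : ι → ℝ => ∑ i, (v i - c i) ^ 2 := by
  refine ⟨convex_univ, fun x _ y _ a b ha hb hab => ?_⟩
  simp only [Pi.add_apply, Pi.smul_apply, smul_eq_mul, mul_sum, ← sum_add_distrib]
  gcongr with i
  obtain rfl : b = 1 - a := by linarith
  nlinarith [mul_nonneg (mul_nonneg ha hb) (sq_nonneg (x i - y i))]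

/-- The feasible set of the reweighting program without the constraints `0 ≤ v i`. -/
def relaxedWeights (ι : Type*) [Fintype ι] (n R : ℝ) : Set (ι → ℝ) :=
  {v | ∑ i, v i = n ∧ ∑ i, (v i - 1) ^ 2 ≤ R}

theorem convex_relaxedWeights (n R : ℝ) : Convex ℝ (relaxedWeights ι n R) := by
  have hsum : Convex ℝ {v : ι → ℝ | ∑ i, v i = n} :=
    convex_hyperplane ⟨fun _ _ => sum_add_distrib, fun _ _ => (mul_sum _ _ _).symm⟩ n
  simpa [relaxedWeights, Set.ofPred_and] using hsum.inter ((convexOn_sum_sq_sub 1).convex_le R)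

theorem isMinOn_relaxedWeights_of_pos {n R : ℝ} {d w : ι → ℝ} (hw : w ∈ relaxedWeights ι n R)
    (hpos : ∀ i, 0 < w i)
    (hmin : ∀ v, (∀ i, 0 ≤ v i) → v ∈ relaxedWeights ι n R → ∑ i, d i * w i ≤ ∑ i, d i * v i) :
    IsMinOn (fun v => ∑ i, d i * v i) (relaxedWeights ι n R) w := by
  have hnhds : {v : ι → ℝ | ∀ i, 0 < v i} ∈ 𝓝 w := by
    simpa [Set.pi] using set_pi_mem_nhds Set.finite_univ fun i _ => Ioi_mem_nhds (hpos i)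
  exact IsMinOn.of_isMinOn_inter_of_mem_nhds hw hnhds
    (fun v hv => hmin v (fun i => (hv.2 i).le) hv.1)
    ((dotProductBilin ℝ ℝ d).convexOn (convex_relaxedWeights n R))

theorem sum_sq_sub_pos_of_ne {d : ι → ℝ} {i j : ι} (hij : d i ≠ d j) (c : ℝ) :
    0 < ∑ k, (d k - c) ^ 2 := by
  refine sum_pos' (fun k _ => sq_nonneg _) ?_
  by_cases hi : d i = c
  · exact ⟨j, mem_univ j, sq_pos_of_ne_zero (sub_ne_zero.2 (hi ▸ hij.symm))⟩
  · exact ⟨i, mem_univ i, sq_pos_of_ne_zero (sub_ne_zero.2 hi)⟩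

theorem sum_sub_div_card_eq_zero [Nonempty ι] (d : ι → ℝ) :
    ∑ i, (d i - (∑ j, d j) / Fintype.card ι) = 0 := by
  have hcard : (Fintype.card ι : ℝ) ≠ 0 := Nat.cast_ne_zero.2 Fintype.card_ne_zero
  simp [sum_sub_distrib, card_univ, mul_div_cancel₀ _ hcard]

theorem sum_mul_sub_sum_mul_of_sum_eq {d u v : ι → ℝ} (huv : ∑ i, u i = ∑ i, v i) (c : ℝ) :
    ∑ i, d i * u i - ∑ i, d i * v i =
      ∑ i, (d i - c) * (u i - 1) - ∑ i, (d i - c) * (v i - 1) := by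
  simp only [sub_mul, mul_sub, mul_one, sum_sub_distrib, ← mul_sum]
  linear_combination c * huv

theorem one_sub_mul_div_sqrt_mem_relaxedWeights {e : ι → ℝ} (he : ∑ i, e i = 0)
    (he₂ : 0 < ∑ i, e i ^ 2) (r : ℝ) :
    (fun i => 1 - r * e i / √(∑ j, e j ^ 2)) ∈ relaxedWeights ι (Fintype.card ι) (r ^ 2) := by
  refine ⟨?_, le_of_eq ?_⟩
  · simp [sum_sub_distrib, ← sum_div, ← mul_sum, he, card_univ]
  · simp only [sub_sub_cancel_left, neg_sq, div_pow, mul_pow, ← sum_div, ← mul_sum,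
      Real.sq_sqrt he₂.le]
    field_simp

theorem sum_mul_one_sub_mul_div_sqrt_sub_one (e : ι → ℝ) (r : ℝ) :
    ∑ i, e i * ((1 - r * e i / √(∑ j, e j ^ 2)) - 1) = -(r * √(∑ j, e j ^ 2)) := by
  set S := √(∑ j, e j ^ 2)
  have hS2 : ∑ j, e j ^ 2 = S ^ 2 := (Real.sq_sqrt (sum_nonneg fun j _ => sq_nonneg (e j))).symm
  calc ∑ i, e i * ((1 - r * e i / S) - 1) = -(r / S) * ∑ i, e i ^ 2 := by
        rw [mul_sum]; exact sum_congr rfl fun i _ => by ring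
    _ = -(r * S) := by
        rw [hS2]
        rcases eq_or_ne S 0 with hS | hS
        · simp [hS]
        · field_simp

theorem sqrt_sum_sq_mul_eq_neg_of_sum_mul_le {x e : ι → ℝ} {r : ℝ} (hr : 0 ≤ r)
    (hx : ∑ i, x i ^ 2 ≤ r ^ 2) (hex : ∑ i, e i * x i ≤ -(r * √(∑ i, e i ^ 2))) (i : ι) :
    √(∑ j, e j ^ 2) * x i = -(r * e i) := by
  set S := √(∑ j, e j ^ 2)
  have hS : 0 ≤ S := Real.sqrt_nonneg _
  have hS2 : ∑ j, e j ^ 2 = S ^ 2 := (Real.sq_sqrt (sum_nonneg fun j _ => sq_nonneg (e j))).symm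
  have hexpand : ∑ j, (S * x j + r * e j) ^ 2 =
      S ^ 2 * ∑ j, x j ^ 2 + 2 * S * r * ∑ j, e j * x j + r ^ 2 * ∑ j, e j ^ 2 := by
    simp only [mul_sum, ← sum_add_distrib]
    exact sum_congr rfl fun j _ => by ring
  have hzero : ∑ j, (S * x j + r * e j) ^ 2 = 0 := by
    refine le_antisymm ?_ (sum_nonneg fun j _ => sq_nonneg _)
    rw [hexpand, hS2]
    nlinarith [mul_le_mul_of_nonneg_left hx (sq_nonneg S),
      mul_le_mul_of_nonneg_left hex (mul_nonneg (mul_nonneg zero_le_two hS) hr)]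
  have := (sum_eq_zero_iff_of_nonneg fun j _ => sq_nonneg _).1 hzero i (mem_univ i)
  linear_combination pow_eq_zero_iff two_ne_zero |>.1 this

end Weights

theorem reweighting_lp_closed_form_general (m : ℕ) (ρ : ℝ) (hρ : 0 < ρ)
    (d w : Fin m → ℝ)
    (hd : ∃ i j, d i ≠ d j)
    (hw : (∀ i, 0 ≤ w i) ∧ ∑ i, w i = m ∧ ∑ i, (w i - 1) ^ 2 ≤ ρ * m)
    (hpos : ∀ i, 0 < w i)
    (hmin : ∀ v : Fin m → ℝ, ((∀ i, 0 ≤ v i) ∧ ∑ i, v i = m ∧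
        ∑ i, (v i - 1) ^ 2 ≤ ρ * m) → ∑ i, d i * w i ≤ ∑ i, d i * v i) :
    (∀ i, w i = 1 - Real.sqrt (ρ * m) * (d i - (∑ j, d j) / m) /
        Real.sqrt (∑ j, (d j - (∑ j', d j') / m) ^ 2)) ∧
    ∀ i j, d i < d j → w j < w i := by
  obtain ⟨i₀, j₀, hij⟩ := hd
  have : Nonempty (Fin m) := ⟨i₀⟩
  have hρm : 0 < ρ * m := mul_pos hρ (Nat.cast_pos.2 i₀.pos)
  set e : Fin m → ℝ := fun i => d i - (∑ j, d j) / m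
  set r := √(ρ * m)
  have hr : 0 < r := Real.sqrt_pos.2 hρm
  have hr2 : r ^ 2 = ρ * m := Real.sq_sqrt hρm.le
  have he : ∑ i, e i = 0 := by simpa only [Fintype.card_fin] using sum_sub_div_card_eq_zero d
  have he₂ : 0 < ∑ i, e i ^ 2 := sum_sq_sub_pos_of_ne hij _
  set S := √(∑ i, e i ^ 2)
  have hS : 0 < S := Real.sqrt_pos.2 he₂
  have hwmin : IsMinOn (fun v => ∑ i, d i * v i) (relaxedWeights (Fin m) m (ρ * m)) w :=
    isMinOn_relaxedWeights_of_pos hw.2 hpos fun v hv₀ hv => hmin v ⟨hv₀, hv⟩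
  have hstar : (fun i => 1 - r * e i / S) ∈ relaxedWeights (Fin m) m (ρ * m) := by
    simpa only [Fintype.card_fin, hr2] using one_sub_mul_div_sqrt_mem_relaxedWeights he he₂ r
  have hle : ∑ i, e i * (w i - 1) ≤ -(r * S) := by
    have hdiff : ∑ i, d i * w i - ∑ i, d i * (1 - r * e i / S) =
        ∑ i, e i * (w i - 1) - ∑ i, e i * ((1 - r * e i / S) - 1) :=
      sum_mul_sub_sum_mul_of_sum_eq (hw.2.1.trans hstar.1.symm) _
    have hobj : ∑ i, d i * w i ≤ ∑ i, d i * (1 - r * e i / S) := hwmin hstar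
    have hval : ∑ i, e i * ((1 - r * e i / S) - 1) = -(r * S) :=
      sum_mul_one_sub_mul_div_sqrt_sub_one e r
    linarith
  have hform : ∀ i, w i = 1 - r * e i / S := fun i => by
    have := sqrt_sum_sq_mul_eq_neg_of_sum_mul_le (x := fun i => w i - 1) hr.le
      (hw.2.2.trans hr2.ge) hle i
    field_simp
    linear_combination this
  refine ⟨hform, fun i j hij => ?_⟩
  rw [hform i, hform j]
  gcongr
  exact sub_lt_sub_right hij _

/-- Closed-form structure of the reweighting linear program: if `d` is not
constant and the minimizer `w*` of `d ᵀ w` over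
`𝒲' = {w : w ≥ 0, ∑ w = m, ∑ (w-1)² ≤ ρm}` has all coordinates positive, then
`w*_i = 1 - √(ρm) (d_i - d̄) / ‖d - d̄ 1‖₂`; in particular smaller
discriminator outputs receive larger weights. -/
theorem reweighting_lp_closed_form (m : ℕ) (hm : 1 ≤ m) (ρ : ℝ) (hρ : 0 < ρ)
    (d w : Fin m → ℝ)
    (hd : ∃ i j, d i ≠ d j)
    (hw : (∀ i, 0 ≤ w i) ∧ ∑ i, w i = m ∧ ∑ i, (w i - 1) ^ 2 ≤ ρ * m)
    (hpos : ∀ i, 0 < w i)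
    (hmin : ∀ v : Fin m → ℝ, ((∀ i, 0 ≤ v i) ∧ ∑ i, v i = m ∧
        ∑ i, (v i - 1) ^ 2 ≤ ρ * m) → ∑ i, d i * w i ≤ ∑ i, d i * v i) :
    (∀ i, w i = 1 - Real.sqrt (ρ * m) * (d i - (∑ j, d j) / m) /
        Real.sqrt (∑ j, (d j - (∑ j', d j') / m) ^ 2)) ∧
    ∀ i j, d i < d j → w j < w i :=
  reweighting_lp_closed_form_general m ρ hρ d w hd hw hpos hmin
end
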